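/- There is a constant d (depending only on the universal machine) such that for all binary strings x and y: I(y : x) ≤ I(x : y) + 2·C⁽²⁾(y | n_y) + (C(x | n_x) + C(y | x, n_y) − C(xy | n_x, n_y)) + d, where xy denotes the concatenation of x and y. (Symmetry of information follows from any chain-rule lower bound with a small deficiency term.) -/

import Mathlib

namespace SymInfo

/-- A conditional machine: the input encodes the pair (program, conditional information). -/
abbrev Machine : Type := ℕ →. ℕ

/-- Machine `M` produces string `x` from some program, given condition `cond`. -/
def Produces (M : Machine) (x cond : List Bool) : Prop :=
  ∃ p : List Bool, Encodable.encode x ∈ M (Nat.pair (Encodable.encode p) (Encodable.encode cond))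

/-- Conditional plain Kolmogorov complexity of `x` given `cond` w.r.t. `M`:
the length of a shortest program producing `x` from `cond`. -/
noncomputable def C (M : Machine) (x cond : List Bool) : ℕ :=
  sInf {n | ∃ p : List Bool, p.length = n ∧
    Encodable.encode x ∈ M (Nat.pair (Encodable.encode p) (Encodable.encode cond))}

/-- Binary representation of a natural number. -/
def bin (n : ℕ) : List Bool := n.bits

/-- Standard pairing of two strings, used for conditioning on several objects. -/
def pair2 (a b : List Bool) : List Bool :=
  bin (Nat.pair (Encodable.encode a) (Encodable.encode b))

/-- `U` is a universal machine for plain conditional complexity: it is partial computable,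
produces every string under every condition, and simulates every partial computable
machine up to an additive constant. -/
def IsUniversal (U : Machine) : Prop :=
  Nat.Partrec U ∧ (∀ x cond : List Bool, Produces U x cond) ∧
    ∀ M : Machine, Nat.Partrec M → ∃ c : ℕ, ∀ x cond : List Bool,
      Produces M x cond → C U x cond ≤ C M x cond + c

/-- `C(x | n_x)`: complexity of `x` given (the binary representation of) its length. -/
noncomputable def CL (U : Machine) (x : List Bool) : ℕ := C U x (bin x.length)

/-- `C⁽²⁾(x | n_x) = C(C(x | n_x) | n_x)`. -/
noncomputable def C2 (U : Machine) (x : List Bool) : ℕ := C U (bin (CL U x)) (bin x.length)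

/-- `I(x : y) = C(y | n_y) − C(y | x, n_y)`: the information in `x` about `y`. -/
noncomputable def I (U : Machine) (x y : List Bool) : ℤ :=
  (C U y (bin y.length) : ℤ) - (C U y (pair2 x (bin y.length)) : ℤ)

/-- Base-2 logarithm with the convention `log 0 = 0` (and `log 1 = 0`). -/
def log2 (n : ℕ) : ℕ := Nat.log 2 n

/-!
Take shortest programs `s` for `bin C(y | b)` given `b`, `q` for `y` given `b`, and `r` for `x`
given `(y, a)`. Since `s` tells where `q` ends, `1^|s| 0 s q r` is a program for `x ++ y`
given `(a, b)`, so `C(xy | a, b) ≤ 2 C(C(y | b) | b) + C(y | b) + C(x | y, a) + O(1)`.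
With `a = n_x` and `b = n_y`, this chain-rule upper bound rearranges to the claim.
-/

open Encodable

theorem _root_.Nat.bits_eq_cons {n : ℕ} (hn : n ≠ 0) : n.bits = n.bodd :: n.div2.bits := by
  conv_lhs => rw [← Nat.bit_bodd_div2 n]
  refine Nat.bits_append_bit _ _ fun h => ?_
  by_contra hb
  rw [← Nat.bit_bodd_div2 n, h, Bool.eq_false_iff.mpr hb] at hn
  exact hn rfl

theorem _root_.Primrec.nat_bits : Primrec Nat.bits := by
  let g : Unit → List (List Bool) → Option (List Bool) := fun _ l =>
    some (if l.length = 0 then [] else l.length.bodd :: l.getD l.length.div2 [])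
  have hbody : Primrec fun l : List (List Bool) =>
      if l.length = 0 then [] else l.length.bodd :: l.getD l.length.div2 [] :=
    Primrec.ite (Primrec.eq.comp Primrec.list_length (Primrec.const 0)) (Primrec.const [])
      (Primrec.list_cons.comp (Primrec.nat_bodd.comp Primrec.list_length)
        ((Primrec.list_getD []).comp Primrec.id (Primrec.nat_div2.comp Primrec.list_length)))
  have hg : Primrec₂ g := (Primrec.option_some.comp (hbody.comp Primrec.snd)).to₂
  have hrec : ∀ n, g () ((List.range n).map Nat.bits) = some n.bits := by
    intro n
    rcases eq_or_ne n 0 with rfl | hn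
    · rfl
    · have hlt : n.div2 < n := Nat.binaryRec_decreasing hn
      simp [g, hn, Nat.bits_eq_cons hn, List.getD_eq_getElem?_getD, hlt]
  exact (Primrec.nat_strong_rec _ hg fun _ n => hrec n).comp (Primrec.const ()) Primrec.id

def ofBits (l : List Bool) : ℕ := l.foldr Nat.bit 0

@[simp] theorem ofBits_bits (n : ℕ) : ofBits n.bits = n := by
  induction n using Nat.binaryRec' with
  | zero => rfl
  | bit b n h ih => rw [Nat.bits_append_bit _ _ h, ofBits, List.foldr_cons, ← ofBits, ih]

theorem primrec_ofBits : Primrec ofBits := by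
  have hbit : Primrec₂ fun (_ : List Bool) (bn : Bool × ℕ) => Nat.bit bn.1 bn.2 :=
    (Primrec.cond (Primrec.fst.comp Primrec.snd)
      (Primrec.nat_double_succ.comp (Primrec.snd.comp Primrec.snd))
      (Primrec.nat_double.comp (Primrec.snd.comp Primrec.snd))).to₂.of_eq
      fun _ ⟨b, n⟩ => by cases b <;> simp [Nat.bit]
  exact Primrec.list_foldr Primrec.id (Primrec.const 0) hbit

theorem pair2_eq_bin_encode (a b : List Bool) : pair2 a b = bin (encode (a, b)) := by
  rw [pair2, encode_prod_val]

theorem decode_ofBits_pair2 (a b : List Bool) :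
    decode (α := List Bool × List Bool) (ofBits (pair2 a b)) = some (a, b) := by
  rw [pair2_eq_bin_encode, bin, ofBits_bits, encodek]

theorem primrec_pair2 : Primrec₂ pair2 :=
  (Primrec.nat_bits.comp (Primrec.encode.comp (Primrec.pair Primrec.fst Primrec.snd))).to₂.of_eq
    fun a b => (pair2_eq_bin_encode a b).symm

def selfDelim (s : List Bool) : List Bool := List.replicate s.length true ++ false :: s

def splitSelfDelim (p : List Bool) : List Bool × List Bool :=
  ((p.dropWhile id).tail.take (p.takeWhile id).length,
    (p.dropWhile id).tail.drop (p.takeWhile id).length)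

@[simp] theorem length_selfDelim (s : List Bool) : (selfDelim s).length = 2 * s.length + 1 := by
  simp only [selfDelim, List.length_append, List.length_replicate, List.length_cons]
  omega

@[simp] theorem splitSelfDelim_selfDelim_append (s t : List Bool) :
    splitSelfDelim (selfDelim s ++ t) = (s, t) := by
  simp [splitSelfDelim, selfDelim]

theorem primrec_splitSelfDelim : Primrec splitSelfDelim := by
  have hlen : Primrec fun p : List Bool => (p.takeWhile id).length :=
    Primrec.list_length.comp (Primrec.list_takeWhile Primrec.id)
  have hrest : Primrec fun p : List Bool => (p.dropWhile id).tail :=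
    Primrec.list_tail.comp (Primrec.list_dropWhile Primrec.id)
  exact Primrec.pair (Primrec.list_take.comp hlen hrest) (Primrec.list_drop.comp hlen hrest)

def run (M : Machine) (p cond : List Bool) : Part (List Bool) :=
  (M (Nat.pair (encode p) (encode cond))).bind fun n =>
    (decode₂ (List Bool) n : Part (List Bool))

theorem mem_run_iff {M : Machine} {x p cond : List Bool} :
    x ∈ run M p cond ↔ encode x ∈ M (Nat.pair (encode p) (encode cond)) := by
  simp only [run, Part.mem_bind_iff, Part.mem_coe, Option.mem_def, decode₂_eq_some]
  exact ⟨fun ⟨n, hn, hx⟩ => hx ▸ hn, fun h => ⟨_, h, rfl⟩⟩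

theorem partrec_run {M : Machine} (hM : Nat.Partrec M) : Partrec₂ (run M) :=
  ((Partrec.nat_iff.mpr hM).comp (Primrec₂.natPair.comp (Primrec.encode.comp Primrec.fst)
    (Primrec.encode.comp Primrec.snd)).to_comp).bind
    (Primrec.decode₂.to_comp.comp Computable.snd).ofOption

def ofFun (f : List Bool → List Bool →. List Bool) : Machine := fun n =>
  (decode (α := List Bool × List Bool) n : Part (List Bool × List Bool)).bind
    fun pc => (f pc.1 pc.2).map encode

theorem nat_partrec_ofFun {f : List Bool → List Bool →. List Bool} (hf : Partrec₂ f) :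
    Nat.Partrec (ofFun f) :=
  Partrec.nat_iff.mp <| Computable.decode.ofOption.bind
    ((hf.comp (Computable.fst.comp Computable.snd) (Computable.snd.comp Computable.snd)).map
      (Computable.encode.comp Computable.snd).to₂)

theorem mem_run_ofFun {f : List Bool → List Bool →. List Bool} {x p cond : List Bool}
    (h : x ∈ f p cond) : x ∈ run (ofFun f) p cond := by
  rw [mem_run_iff, ofFun, ← encode_prod_val, encodek]
  exact Part.mem_bind_iff.mpr ⟨(p, cond), Part.mem_some _, Part.mem_map encode h⟩

theorem C_le_length {M : Machine} {x p cond : List Bool} (h : x ∈ run M p cond) :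
    C M x cond ≤ p.length :=
  Nat.sInf_le ⟨p, rfl, mem_run_iff.mp h⟩

theorem exists_run_length_eq_C {M : Machine} {x cond : List Bool} (h : Produces M x cond) :
    ∃ p, p.length = C M x cond ∧ x ∈ run M p cond := by
  obtain ⟨p, hp⟩ := h
  obtain ⟨q, hq, hrun⟩ := Nat.sInf_mem (s := {n | ∃ p : List Bool, p.length = n ∧
    encode x ∈ M (Nat.pair (encode p) (encode cond))}) ⟨p.length, p, rfl, hp⟩
  exact ⟨q, hq, mem_run_iff.mpr hrun⟩

/-- The invariance theorem, for interpreters of strings. -/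
theorem IsUniversal.exists_C_le_length {U : Machine} (hU : IsUniversal U)
    {f : List Bool → List Bool →. List Bool} (hf : Partrec₂ f) :
    ∃ c, ∀ x p cond, x ∈ f p cond → C U x cond ≤ p.length + c := by
  obtain ⟨c, hc⟩ := hU.2.2 (ofFun f) (nat_partrec_ofFun hf)
  refine ⟨c, fun x p cond h => ?_⟩
  have hrun := mem_run_ofFun h
  exact (hc x cond ⟨p, mem_run_iff.mp hrun⟩).trans (by gcongr; exact C_le_length hrun)

/-- On `selfDelim s ++ t` given `pair2 a b`: the output `bin k` of `s` on `b` tells how to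
split `t = q ++ r` with `|q| = k`; then `q` computes `y` from `b` and `r` computes `x` from
`pair2 y a`. -/
def concatInterpreter (U : Machine) (p cond : List Bool) : Part (List Bool) :=
  (decode (α := List Bool × List Bool) (ofBits cond) : Part (List Bool × List Bool)).bind
    fun ab => (run U (splitSelfDelim p).1 ab.2).bind
    fun k => (run U ((splitSelfDelim p).2.take (ofBits k)) ab.2).bind
    fun y => (run U ((splitSelfDelim p).2.drop (ofBits k)) (pair2 y ab.1)).map (· ++ y)

theorem partrec_concatInterpreter {U : Machine} (hU : Nat.Partrec U) :
    Partrec₂ (concatInterpreter U) := by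
  have hrun := partrec_run hU
  have hsplit := primrec_splitSelfDelim.to_comp
  have hofBits := primrec_ofBits.to_comp
  refine (Computable.decode.comp (hofBits.comp Computable.snd)).ofOption.bind ?_
  refine (hrun.comp (Computable.fst.comp (hsplit.comp (Computable.fst.comp Computable.fst)))
    (Computable.snd.comp Computable.snd)).bind ?_
  refine (hrun.comp (Primrec.list_take.to_comp.comp (hofBits.comp Computable.snd)
      (Computable.snd.comp
        (hsplit.comp (Computable.fst.comp (Computable.fst.comp Computable.fst)))))
    (Computable.snd.comp (Computable.snd.comp Computable.fst))).bind ?_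
  refine Partrec.map (hrun.comp (Primrec.list_drop.to_comp.comp
      (hofBits.comp (Computable.snd.comp Computable.fst))
      (Computable.snd.comp (hsplit.comp
        (Computable.fst.comp (Computable.fst.comp (Computable.fst.comp Computable.fst))))))
    (primrec_pair2.to_comp.comp Computable.snd
      (Computable.fst.comp (Computable.snd.comp (Computable.fst.comp Computable.fst))))) ?_
  exact (Primrec.list_append.to_comp.comp Computable.snd
    (Computable.snd.comp Computable.fst)).to₂

theorem mem_concatInterpreter {U : Machine} {x y a b s q r k : List Bool}
    (hk : k ∈ run U s b) (hq : q.length = ofBits k) (hy : y ∈ run U q b)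
    (hx : x ∈ run U r (pair2 y a)) :
    x ++ y ∈ concatInterpreter U (selfDelim s ++ (q ++ r)) (pair2 a b) := by
  simp only [concatInterpreter, decode_ofBits_pair2, splitSelfDelim_selfDelim_append,
    Part.coe_some, Part.bind_some]
  refine Part.mem_bind_iff.mpr ⟨k, hk, Part.mem_bind_iff.mpr ⟨y, ?_, ?_⟩⟩
  · rwa [← hq, List.take_left]
  · rw [← hq, List.drop_left]
    exact Part.mem_map _ hx

theorem IsUniversal.exists_C_append_le {U : Machine} (hU : IsUniversal U) :
    ∃ c, ∀ x y a b, C U (x ++ y) (pair2 a b) ≤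
      2 * C U (bin (C U y b)) b + C U y b + C U x (pair2 y a) + c := by
  obtain ⟨c, hc⟩ := hU.exists_C_le_length (partrec_concatInterpreter hU.1)
  refine ⟨c + 1, fun x y a b => ?_⟩
  obtain ⟨s, hs, hks⟩ := exists_run_length_eq_C (hU.2.1 (bin (C U y b)) b)
  obtain ⟨q, hq, hyq⟩ := exists_run_length_eq_C (hU.2.1 y b)
  obtain ⟨r, hr, hxr⟩ := exists_run_length_eq_C (hU.2.1 x (pair2 y a))
  have hqk : q.length = ofBits (bin (C U y b)) := by rw [hq, bin, ofBits_bits]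
  have := hc _ _ _ (mem_concatInterpreter hks hqk hyq hxr)
  simp only [List.length_append, length_selfDelim] at this
  omega

/-- Symmetry of information follows from any chain-rule lower bound with a small
deficiency term: `I(y : x) ≤ I(x : y) + 2·C⁽²⁾(y | n_y) + w + O(1)` where
`w = C(x | n_x) + C(y | x, n_y) − C(xy | n_x, n_y)`. -/
theorem symmetry_from_chain_rule (U : Machine) (hU : IsUniversal U) :
    ∃ d : ℕ, ∀ x y : List Bool,
      I U y x ≤ I U x y + 2 * (C2 U y : ℤ)
        + ((C U x (bin x.length) : ℤ) + (C U y (pair2 x (bin y.length)) : ℤ)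
            - (C U (x ++ y) (pair2 (bin x.length) (bin y.length)) : ℤ))
        + (d : ℤ) := by
  obtain ⟨d, hd⟩ := hU.exists_C_append_le
  refine ⟨d, fun x y => ?_⟩
  have := hd x y (bin x.length) (bin y.length)
  simp only [I, C2, CL]
  omega

end SymInfo
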